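/- arXiv:1403.7938 — 6 statements merged into one kernel-verified Lean document; each statement's English description precedes it below -/
import Mathlib

section
/- Let F be a type of algebras, V a variety of algebras of type F, k ∈ ℕ, and A a k-generated algebra of type F. Then A ∈ V if and only if A satisfies every identity in at most k variables that holds in V. -/
open FirstOrder FirstOrder.Language

universe u v

/-- A bundled algebra for the language `L`: a type together with an
interpretation of the operation symbols of `L`. -/
structure Alg (L : FirstOrder.Language.{u, v}) : Type (max u v 1) where
  carrier : Type
  [str : L.Structure carrier]

attribute [instance] Alg.str

/-- An identity (equational law): a pair of terms in `n` variables. -/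
abbrev Identity (L : FirstOrder.Language) :=
  Σ n : ℕ, L.Term (Fin n) × L.Term (Fin n)

/-- `A` satisfies the identity `e`: the two induced term functions agree. -/
def Alg.Sat {L : FirstOrder.Language} (A : Alg L) (e : Identity L) : Prop :=
  ∀ v : Fin e.1 → A.carrier, e.2.1.realize v = e.2.2.realize v

/-- The class of all models of a set of identities. -/
def ModClass (L : FirstOrder.Language) (E : Set (Identity L)) : Set (Alg L) :=
  {A | ∀ e ∈ E, A.Sat e}

/-- A variety (equational class): a class of algebras defined by a set of identities. -/
def IsVariety (L : FirstOrder.Language) (V : Set (Alg L)) : Prop :=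
  ∃ E : Set (Identity L), V = ModClass L E

/-- `varGen L K` is the smallest variety containing the class `K`:
the models of all identities valid in `K`. -/
def varGen (L : FirstOrder.Language) (K : Set (Alg L)) : Set (Alg L) :=
  ModClass L {e | ∀ B ∈ K, B.Sat e}

/-- `f` is a `k`-edge operation (`k ≥ 2`): a `(k+1)`-ary operation with
`f(y,y,x,…,x) = f(y,x,y,x,…,x) = x` and `f(x,…,x,y,x,…,x) = x` whenever the
single `y` is in a position `≥ 4` (1-indexed). -/
def IsEdgeOp {A : Type} (k : ℕ) (f : (Fin (k + 1) → A) → A) : Prop :=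
  (∀ x y : A, f (fun i => if (i : ℕ) ≤ 1 then y else x) = x) ∧
  (∀ x y : A, f (fun i => if (i : ℕ) = 0 ∨ (i : ℕ) = 2 then y else x) = x) ∧
  (∀ i : Fin (k + 1), 3 ≤ (i : ℕ) → ∀ x y : A,
    f (Function.update (fun _ => x) i y) = x)

/-- An algebra has an edge term if some term induces a `k`-edge operation for some `k ≥ 2`. -/
def HasEdgeTerm (L : FirstOrder.Language) (A : Type) [L.Structure A] : Prop :=
  ∃ k : ℕ, 2 ≤ k ∧ ∃ t : L.Term (Fin (k + 1)), IsEdgeOp k (fun v : Fin (k + 1) → A => t.realize v)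

/-- An algebra is `k`-generated if it is generated by a subset of size at most `k`. -/
def KGen (L : FirstOrder.Language) (k : ℕ) (A : Alg L) : Prop :=
  ∃ S : Set A.carrier, S.Finite ∧ S.ncard ≤ k ∧ Substructure.closure L S = ⊤

/-- An algebra is finitely generated if it is generated by a finite subset. -/
def FinGen (L : FirstOrder.Language) (A : Alg L) : Prop :=
  ∃ S : Set A.carrier, S.Finite ∧ Substructure.closure L S = ⊤

/-- A class of algebras is locally finite if all of its finitely generated members
are finite. -/
def IsLocallyFinite (L : FirstOrder.Language) (V : Set (Alg L)) : Prop :=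
  ∀ A ∈ V, FinGen L A → Finite A.carrier

/-- A finite algebra `B` is cardinality critical if it does not lie in the variety
generated by the algebras in `Var(B)` of size smaller than `B`. -/
def CardCritical (L : FirstOrder.Language) (B : Alg L) : Prop :=
  Finite B.carrier ∧
    B ∉ varGen L {C | C ∈ varGen L {B} ∧ Cardinal.mk C.carrier < Cardinal.mk B.carrier}

/-- `V` is a subcover of `W`: `V ⊂ W` and no variety lies strictly between them. -/
def IsSubcover (L : FirstOrder.Language) (V W : Set (Alg L)) : Prop :=
  V ⊂ W ∧ ¬ ∃ V' : Set (Alg L), IsVariety L V' ∧ V ⊂ V' ∧ V' ⊂ W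

/-! Every element of a `k`-generated algebra `A` is the value of a term at a generating tuple
`g : Fin n → A` with `n ≤ k`. So if `s ≈ t` holds in `V` and `v : Fin m → A` is written as
`v i = wᵢ(g)`, then `s(w) ≈ t(w)` is an identity of `V` in `n ≤ k` variables, and its instance at
`g` is `s(v) = t(v)`. -/

namespace FirstOrder.Language

theorem Substructure.exists_term_realize_eq_of_closure_range_eq_top {L : Language} {M α : Type*}
    [L.Structure M] {g : α → M} (hg : Substructure.closure L (Set.range g) = ⊤) (a : M) :
    ∃ t : L.Term α, t.realize g = a := by
  obtain ⟨t, rfl⟩ := Substructure.mem_closure_iff_exists_term.mp (hg ▸ Substructure.mem_top a)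
  choose preimage h_preimage using fun x : Set.range g => x.2
  refine ⟨t.relabel preimage, ?_⟩
  rw [Term.realize_relabel]
  exact congrArg t.realize (funext h_preimage)

end FirstOrder.Language

theorem KGen.exists_fin_closure_range_eq_top {L : Language} {k : ℕ} {A : Alg L}
    (hA : KGen L k A) :
    ∃ n ≤ k, ∃ g : Fin n → A.carrier, Substructure.closure L (Set.range g) = ⊤ := by
  obtain ⟨S, hS_finite, hS_card, hS_closure⟩ := hA
  obtain ⟨n, g, rfl⟩ := hS_finite.fin_embedding
  refine ⟨n, ?_, g, hS_closure⟩
  simpa [Set.ncard_range_of_injective g.injective] using hS_card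

def Identity.subst {L : Language} (e : Identity L) {n : ℕ} (w : Fin e.1 → L.Term (Fin n)) :
    Identity L :=
  ⟨n, (e.2.1.subst w, e.2.2.subst w)⟩

namespace Alg

variable {L : Language} {A : Alg L} {e : Identity L}

theorem Sat.subst (h : A.Sat e) {n : ℕ} (w : Fin e.1 → L.Term (Fin n)) : A.Sat (e.subst w) := by
  intro (v : Fin n → A.carrier)
  simpa only [Identity.subst, Term.realize_subst] using h fun i => (w i).realize v

theorem sat_of_forall_sat_subst {n : ℕ} {g : Fin n → A.carrier}
    (hg : ∀ a, ∃ t : L.Term (Fin n), t.realize g = a)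
    (h : ∀ w : Fin e.1 → L.Term (Fin n), A.Sat (e.subst w)) : A.Sat e := by
  intro v
  choose w hw using fun i => hg (v i)
  have h_inst := h w g
  simp only [Identity.subst, Term.realize_subst] at h_inst
  rwa [funext hw] at h_inst

end Alg

theorem mem_variety_iff_sat_k_variable_identities_general
    (L : FirstOrder.Language)
    (V : Set (Alg L)) (hV : IsVariety L V)
    (k : ℕ) (A : Alg L) (hA : KGen L k A) :
    A ∈ V ↔
      ∀ n ≤ k, ∀ s t : L.Term (Fin n),
        (∀ B ∈ V, B.Sat ⟨n, (s, t)⟩) → A.Sat ⟨n, (s, t)⟩ := by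
  obtain ⟨E, rfl⟩ := hV
  refine ⟨fun hA_mem n _ s t h_sat => h_sat A hA_mem, fun h e he => ?_⟩
  obtain ⟨n, hn, g, hg⟩ := hA.exists_fin_closure_range_eq_top
  exact Alg.sat_of_forall_sat_subst (Substructure.exists_term_realize_eq_of_closure_range_eq_top hg)
    fun w => h n hn _ _ fun B hB => (hB e he).subst w

/-- **Lemma (identities and k-generated algebras, part 2).** Let `V` be a variety of
type `L`, let `k : ℕ`, and let `A` be a `k`-generated algebra of type `L`.
Then `A ∈ V` if and only if `A` satisfies every identity with at most `k`
variables that holds in `V`. -/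
theorem mem_variety_iff_sat_k_variable_identities
    (L : FirstOrder.Language) [L.IsAlgebraic]
    (V : Set (Alg L)) (hV : IsVariety L V)
    (k : ℕ) (A : Alg L) (hA : KGen L k A) :
    A ∈ V ↔
      ∀ n ≤ k, ∀ s t : L.Term (Fin n),
        (∀ B ∈ V, B.Sat ⟨n, (s, t)⟩) → A.Sat ⟨n, (s, t)⟩ :=
  mem_variety_iff_sat_k_variable_identities_general L V hV k A hA
end

section
/- Let V be a locally finite variety of arbitrary type F, and let W be a subvariety of V. Then the following are equivalent: (1) there exists no infinite strictly ascending chain of varieties V_1 ⊂ V_2 ⊂ V_3 ⊂ ⋯ with W = Var(⋃_{i∈ℕ} V_i); (2) W is finitely generated. -/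
open FirstOrder FirstOrder.Language

universe u v

/-!
A locally finite variety `W` has only finitely many `n`-ary term operations for each `n`, so
finitely many members of any class `K ⊆ W` (with assignments) refute every `n`-variable identity
that fails in `K`. For `K = W`, a product of such witnesses yields a finite free algebra `Fₙ` of
`W` on `n` generators, and `W = Var(⋃ₙ Var(Fₙ))` for the ascending sequence `Var(Fₙ)`; if `W` is
not finitely generated this sequence never stabilizes and has a strictly ascending subsequence.
Conversely, if `W = Var(B)` with `|B| = n`, the finitely many witnesses for the `n`-variable
identities failing in `⋃ᵢ Vᵢ` all lie in one `Vᵢ`, whence `B ∈ Vᵢ` and `W ⊆ Vᵢ`.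
-/

variable {L : FirstOrder.Language.{u, v}}

lemma subset_varGen (K : Set (Alg L)) : K ⊆ varGen L K :=
  fun _ hA _ he => he _ hA

lemma isVariety_varGen (K : Set (Alg L)) : IsVariety L (varGen L K) :=
  ⟨_, rfl⟩

lemma IsVariety.varGen_subset {K U : Set (Alg L)} (hU : IsVariety L U) (hKU : K ⊆ U) :
    varGen L K ⊆ U := by
  obtain ⟨E, rfl⟩ := hU
  exact fun _ hA e he => hA e fun _ hB => hKU hB e he

lemma IsVariety.varGen_eq {U : Set (Alg L)} (hU : IsVariety L U) : varGen L U = U :=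
  (hU.varGen_subset subset_rfl).antisymm (subset_varGen U)

lemma Alg.Sat.relabel {A : Alg L} {m n : ℕ} {p q : L.Term (Fin m)} (h : A.Sat ⟨m, (p, q)⟩)
    (σ : Fin m → Fin n) : A.Sat ⟨n, (p.relabel σ, q.relabel σ)⟩ := fun v => by
  simpa only [Term.realize_relabel] using h (v ∘ σ)

lemma Alg.Sat.of_relabel {A : Alg L} {m n : ℕ} {p q : L.Term (Fin m)} {σ : Fin m → Fin n}
    (hσ : Function.Injective σ) (h : A.Sat ⟨n, (p.relabel σ, q.relabel σ)⟩) :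
    A.Sat ⟨m, (p, q)⟩ := fun v => by
  have : Nonempty A.carrier := ⟨p.realize v⟩
  have hv := h (Function.extend σ v (Classical.arbitrary _))
  simp only [Term.realize_relabel, Function.extend_comp hσ] at hv
  exact hv

section Closure

variable {M : Type} [L.Structure M]

lemma exists_term_realize_eq {n : ℕ} {g : Fin n → M} {x : M}
    (hx : x ∈ Substructure.closure L (Set.range g)) : ∃ t : L.Term (Fin n), t.realize g = x := by
  obtain ⟨t, rfl⟩ := Substructure.mem_closure_iff_exists_term.mp hx
  choose σ hσ using fun y : Set.range g => y.2
  exact ⟨t.relabel σ, by rw [Term.realize_relabel, show g ∘ σ = Subtype.val from funext hσ]⟩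

end Closure

namespace Alg

def pi {ι : Type} (A : ι → Alg L) : Alg L where
  carrier := ∀ i, (A i).carrier
  str :=
    { funMap := fun f x i => Structure.funMap f fun k => x k i
      RelMap := fun r x => ∀ i, Structure.RelMap r fun k => x k i }

lemma realize_pi {ι : Type} {A : ι → Alg L} {α : Type} (t : L.Term α) (w : α → (pi A).carrier)
    (i : ι) : t.realize w i = t.realize fun k => w k i := by
  induction t with
  | var => rfl
  | func f ts ih => exact congrArg (Structure.funMap f) (funext ih)

abbrev span (A : Alg L) {n : ℕ} (g : Fin n → A.carrier) : Alg L where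
  carrier := Substructure.closure L (Set.range g)

def spanGen {A : Alg L} {n : ℕ} (g : Fin n → A.carrier) : Fin n → (A.span g).carrier :=
  fun k => ⟨g k, Substructure.subset_closure (Set.mem_range_self k)⟩

lemma realize_spanGen {A : Alg L} {n : ℕ} (g : Fin n → A.carrier) (t : L.Term (Fin n)) :
    Subtype.val (t.realize (spanGen g)) = t.realize g :=
  (realize_term_substructure (spanGen g) t).symm

lemma closure_range_spanGen {A : Alg L} {n : ℕ} (g : Fin n → A.carrier) :
    Substructure.closure L (Set.range (spanGen g)) = ⊤ := by
  refine eq_top_iff.mpr fun x _ => ?_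
  obtain ⟨t, ht⟩ := exists_term_realize_eq x.2
  have hx : x = t.realize (spanGen g) := Subtype.ext ((realize_spanGen g t).trans ht).symm
  exact hx ▸ Term.realize_mem _ _ fun k => Substructure.subset_closure (Set.mem_range_self k)

end Alg

section Variety

variable {W : Set (Alg L)}

lemma IsVariety.pi_mem (hW : IsVariety L W) {ι : Type} {A : ι → Alg L} (hA : ∀ i, A i ∈ W) :
    Alg.pi A ∈ W := by
  obtain ⟨E, rfl⟩ := hW
  exact fun e he v => funext fun i => by rw [Alg.realize_pi, Alg.realize_pi]; exact hA i e he _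

lemma IsVariety.span_mem (hW : IsVariety L W) {A : Alg L} (hA : A ∈ W) {n : ℕ}
    (g : Fin n → A.carrier) : A.span g ∈ W := by
  obtain ⟨E, rfl⟩ := hW
  refine fun e he v => Subtype.val_injective ?_
  rw [← realize_term_substructure, ← realize_term_substructure]
  exact hA e he _

lemma IsVariety.finite_span (hW : IsVariety L W) (hLF : IsLocallyFinite L W) {A : Alg L}
    (hA : A ∈ W) {n : ℕ} (g : Fin n → A.carrier) : Finite (A.span g).carrier :=
  hLF _ (hW.span_mem hA g) ⟨_, Set.finite_range _, Alg.closure_range_spanGen g⟩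

end Variety

lemma mem_varGen_of_forall_realize_eq {K : Set (Alg L)} {B : Alg L} {n : ℕ}
    {g : Fin n → B.carrier} (hg : Substructure.closure L (Set.range g) = ⊤)
    (h : ∀ p q : L.Term (Fin n), (∀ A ∈ K, A.Sat ⟨n, (p, q)⟩) → p.realize g = q.realize g) :
    B ∈ varGen L K := by
  rintro ⟨m, p, q⟩ he v
  obtain ⟨t, ht⟩ : ∃ t : Fin m → L.Term (Fin n), ∀ k, (t k).realize g = v k :=
    ⟨_, fun k => (exists_term_realize_eq (hg ▸ Substructure.mem_top (v k))).choose_spec⟩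
  have hsubst := h (p.subst t) (q.subst t) fun A hA w => by
    simpa only [Term.realize_subst] using he A hA _
  simpa only [Term.realize_subst, ht] using hsubst

def termSetoid (K : Set (Alg L)) (n : ℕ) : Setoid (L.Term (Fin n)) where
  r p q := ∀ A ∈ K, A.Sat ⟨n, (p, q)⟩
  iseqv := ⟨fun _ _ _ _ => rfl, fun h A hA v => (h A hA v).symm,
    fun h h' A hA v => (h A hA v).trans (h' A hA v)⟩

lemma finite_quotient_termSetoid {W : Set (Alg L)} (hW : IsVariety L W)
    (hLF : IsLocallyFinite L W) (n : ℕ) : Finite (Quotient (termSetoid W n)) := by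
  by_contra hinf
  have := not_finite_iff_infinite.mp hinf
  let f := Infinite.natEmbedding (Quotient (termSetoid W n))
  let t : ℕ → L.Term (Fin n) := fun i => (f i).out
  have hsep : ∀ c : {c : ℕ × ℕ // c.1 ≠ c.2}, ∃ A ∈ W, ∃ v : Fin n → A.carrier,
      (t c.1.1).realize v ≠ (t c.1.2).realize v := by
    rintro ⟨⟨i, j⟩, hij⟩
    by_contra! h
    refine hij (f.injective ?_)
    rw [← Quotient.out_eq (f i), ← Quotient.out_eq (f j)]
    exact Quotient.sound h
  choose A hAW v hv using hsep
  -- infinitely many term classes would give an infinite finitely generated algebra in `W`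
  let g : Fin n → (Alg.pi A).carrier := fun k c => v c k
  have hinj : Function.Injective fun i => (t i).realize (Alg.spanGen g) := by
    intro i j hij
    by_contra hne
    apply hv ⟨(i, j), hne⟩
    have hval := congrArg Subtype.val hij
    simp only [Alg.realize_spanGen] at hval
    simpa only [Alg.realize_pi] using congrFun hval ⟨(i, j), hne⟩
  have := hW.finite_span hLF (hW.pi_mem hAW) g
  have := Finite.of_injective _ hinj
  exact not_finite ℕ

lemma finite_quotient_termSetoid_of_subset {K W : Set (Alg L)} (hKW : K ⊆ W) {n : ℕ}
    [Finite (Quotient (termSetoid W n))] : Finite (Quotient (termSetoid K n)) :=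
  Finite.of_surjective
    (Quotient.map id fun p q (h : (termSetoid W n).r p q) A hA => h A (hKW hA))
    (Quotient.ind fun p => ⟨⟦p⟧, rfl⟩)

lemma exists_separating_family {K : Set (Alg L)} {n : ℕ} [Finite (Quotient (termSetoid K n))] :
    ∃ (r : ℕ) (A : Fin r → Alg L) (u : ∀ j, Fin n → (A j).carrier), (∀ j, A j ∈ K) ∧
      ∀ p q : L.Term (Fin n), (∀ j, p.realize (u j) = q.realize (u j)) →
        ∀ B ∈ K, B.Sat ⟨n, (p, q)⟩ := by
  let Q := Quotient (termSetoid K n)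
  have hwit : ∀ c : {c : Q × Q // c.1 ≠ c.2}, ∃ A ∈ K, ∃ u : Fin n → A.carrier,
      c.1.1.out.realize u ≠ c.1.2.out.realize u := by
    rintro ⟨⟨a, b⟩, hab⟩
    by_contra! h
    refine hab ?_
    rw [← Quotient.out_eq a, ← Quotient.out_eq b]
    exact Quotient.sound h
  choose A hA u hu using hwit
  obtain ⟨r, ⟨ε⟩⟩ := Finite.exists_equiv_fin {c : Q × Q // c.1 ≠ c.2}
  refine ⟨r, A ∘ ε.symm, fun j => u (ε.symm j), fun j => hA _, fun p q hpq => ?_⟩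
  by_contra hne
  let c₀ : {c : Q × Q // c.1 ≠ c.2} := ⟨(⟦p⟧, ⟦q⟧), fun h => hne (Quotient.exact h)⟩
  let c := ε.symm (ε c₀)
  have hc : c.1 = (⟦p⟧, ⟦q⟧) := by simp only [c, c₀, Equiv.symm_apply_apply]
  have hp : (termSetoid K n).r c.1.1.out p :=
    Quotient.exact (show Quotient.mk _ c.1.1.out = (⟦p⟧ : Q) by rw [Quotient.out_eq, hc])
  have hq : (termSetoid K n).r c.1.2.out q :=
    Quotient.exact (show Quotient.mk _ c.1.2.out = (⟦q⟧ : Q) by rw [Quotient.out_eq, hc])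
  apply hu c
  calc c.1.1.out.realize (u c) = p.realize (u c) := hp _ (hA c) _
    _ = q.realize (u c) := hpq (ε c₀)
    _ = c.1.2.out.realize (u c) := (hq _ (hA c) _).symm

section RelativelyFree

variable {W : Set (Alg L)}

/-- `B` is the free algebra of `W` on `n` generators, described without its universal property. -/
def IsRelativelyFree (W : Set (Alg L)) (n : ℕ) (B : Alg L) : Prop :=
  B ∈ W ∧ (∃ g : Fin n → B.carrier, Substructure.closure L (Set.range g) = ⊤) ∧
    ∀ p q : L.Term (Fin n), B.Sat ⟨n, (p, q)⟩ → ∀ A ∈ W, A.Sat ⟨n, (p, q)⟩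

lemma exists_finite_isRelativelyFree (hW : IsVariety L W) (hLF : IsLocallyFinite L W) (n : ℕ) :
    ∃ B : Alg L, Finite B.carrier ∧ IsRelativelyFree W n B := by
  have := finite_quotient_termSetoid hW hLF n
  obtain ⟨r, A, u, hAW, hsep⟩ := exists_separating_family (K := W) (n := n)
  let g : Fin n → (Alg.pi A).carrier := fun k j => u j k
  have hP := hW.pi_mem hAW
  refine ⟨_, hW.finite_span hLF hP g, hW.span_mem hP g, ⟨_, Alg.closure_range_spanGen g⟩,
    fun p q hpq => hsep p q fun j => ?_⟩
  have hval := congrArg Subtype.val (hpq (Alg.spanGen g))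
  simp only [Alg.realize_spanGen] at hval
  simpa only [Alg.realize_pi] using congrFun hval j

lemma IsRelativelyFree.sat_of_le {n : ℕ} {B : Alg L} (hB : IsRelativelyFree W n B) {m : ℕ}
    (hmn : m ≤ n) {p q : L.Term (Fin m)} (h : B.Sat ⟨m, (p, q)⟩) {A : Alg L} (hA : A ∈ W) :
    A.Sat ⟨m, (p, q)⟩ :=
  Alg.Sat.of_relabel (Fin.castLE_injective hmn) (hB.2.2 _ _ (h.relabel _) A hA)

lemma IsRelativelyFree.mem_varGen {m n : ℕ} {B B' : Alg L} (hB : IsRelativelyFree W m B)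
    (hB' : IsRelativelyFree W n B') (hmn : m ≤ n) : B ∈ varGen L {B'} := by
  obtain ⟨hBW, ⟨g, hg⟩, -⟩ := hB
  exact mem_varGen_of_forall_realize_eq hg fun p q hpq => hB'.sat_of_le hmn (hpq B' rfl) hBW g

lemma monotone_varGen_of_isRelativelyFree {B : ℕ → Alg L}
    (hB : ∀ n, IsRelativelyFree W n (B n)) : Monotone fun n => varGen L {B n} :=
  fun _ _ hmn => (isVariety_varGen _).varGen_subset
    (Set.singleton_subset_iff.mpr ((hB _).mem_varGen (hB _) hmn))

lemma varGen_iUnion_eq_of_isRelativelyFree (hW : IsVariety L W) {B : ℕ → Alg L}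
    (hB : ∀ n, IsRelativelyFree W n (B n)) {φ : ℕ → ℕ} (hφ : ∀ i, i ≤ φ i) :
    varGen L (⋃ i, varGen L {B (φ i)}) = W := by
  refine subset_antisymm (hW.varGen_subset (Set.iUnion_subset fun i =>
    hW.varGen_subset (Set.singleton_subset_iff.mpr (hB _).1))) ?_
  rintro A hA ⟨m, p, q⟩ he
  exact (hB (φ m)).sat_of_le (hφ m)
    (he _ (Set.mem_iUnion.mpr ⟨m, subset_varGen _ rfl⟩)) hA

end RelativelyFree

lemma Monotone.exists_strictMono_subseq_or_forall_le {α : Type*} [PartialOrder α] {f : ℕ → α}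
    (hf : Monotone f) :
    (∃ φ : ℕ → ℕ, StrictMono φ ∧ ∀ k, f (φ k) < f (φ (k + 1))) ∨ ∃ n, ∀ m, f m ≤ f n := by
  by_cases h : ∀ n, ∃ m > n, f n < f m
  · choose nxt hgt hlt using h
    refine .inl ⟨fun k => nxt^[k] 0, strictMono_nat_of_lt_succ fun k => ?_, fun k => ?_⟩
    · simpa only [Function.iterate_succ_apply'] using hgt _
    · simpa only [Function.iterate_succ_apply'] using hlt _
  · push Not at h
    obtain ⟨n, hn⟩ := h
    refine .inr ⟨n, fun m => (le_total m n).elim (fun hmn => hf hmn) fun hnm => ?_⟩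
    rcases (hf hnm).lt_or_eq with hlt | heq
    · exact absurd hlt (hn m (hnm.lt_of_ne (by rintro rfl; exact hlt.ne rfl)))
    · exact heq.ge

lemma exists_mem_varGen_of_mem_varGen_iUnion {W : Set (Alg L)} (hW : IsVariety L W)
    (hLF : IsLocallyFinite L W) {C : ℕ → Set (Alg L)} (hC : Monotone C) (hCW : ∀ i, C i ⊆ W)
    {B : Alg L} [Finite B.carrier] (hB : B ∈ varGen L (⋃ i, C i)) : ∃ i, B ∈ varGen L (C i) := by
  obtain ⟨n, ⟨ε⟩⟩ := Finite.exists_equiv_fin B.carrier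
  have := finite_quotient_termSetoid hW hLF n
  have := finite_quotient_termSetoid_of_subset (Set.iUnion_subset hCW) (n := n)
  obtain ⟨r, A, u, hA, hsep⟩ := exists_separating_family (K := ⋃ i, C i) (n := n)
  choose idx hidx using fun j => Set.mem_iUnion.mp (hA j)
  have hAC : ∀ j, A j ∈ C (Finset.univ.sup idx) :=
    fun j => hC (Finset.le_sup (Finset.mem_univ j)) (hidx j)
  refine ⟨_, mem_varGen_of_forall_realize_eq (g := ε.symm) ?_ fun p q hpq =>
    hB ⟨n, (p, q)⟩ (hsep p q fun j => hpq _ (hAC j) (u j)) ε.symm⟩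
  rw [ε.symm.surjective.range_eq, Substructure.closure_univ]

theorem no_ascending_chain_iff_finitely_generated_general
    (L : FirstOrder.Language)
    (V : Set (Alg L)) (hLF : IsLocallyFinite L V)
    (W : Set (Alg L)) (hW : IsVariety L W) (hWV : W ⊆ V) :
    (¬ ∃ C : ℕ → Set (Alg L),
        (∀ i, IsVariety L (C i)) ∧ (∀ i, C i ⊂ C (i + 1)) ∧
        W = varGen L (⋃ i, C i)) ↔
      (∃ B : Alg L, Finite B.carrier ∧ W = varGen L {B}) := by
  have hLFW : IsLocallyFinite L W := fun A hA => hLF A (hWV hA)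
  constructor
  · intro hno
    by_contra hfg
    choose B hBfin hB using exists_finite_isRelativelyFree hW hLFW
    rcases (monotone_varGen_of_isRelativelyFree hB).exists_strictMono_subseq_or_forall_le with
      ⟨φ, hφ, hlt⟩ | ⟨n, hn⟩
    · exact hno ⟨fun i => varGen L {B (φ i)}, fun _ => isVariety_varGen _, hlt,
        (varGen_iUnion_eq_of_isRelativelyFree hW hB hφ.id_le).symm⟩
    · refine hfg ⟨B n, hBfin n, subset_antisymm ?_
        (hW.varGen_subset (Set.singleton_subset_iff.mpr (hB n).1))⟩
      calc W = varGen L (⋃ i, varGen L {B (id i)}) :=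
            (varGen_iUnion_eq_of_isRelativelyFree hW hB fun _ => le_rfl).symm
        _ ⊆ varGen L {B n} := (isVariety_varGen _).varGen_subset (Set.iUnion_subset hn)
  · rintro ⟨B, hBfin, hWB⟩ ⟨C, hCvar, hCss, hWC⟩
    have hCW : ∀ i, C i ⊆ W := fun i => hWC ▸ (Set.subset_iUnion C i).trans (subset_varGen _)
    have hBW : B ∈ W := hWB ▸ subset_varGen _ rfl
    obtain ⟨i, hBi⟩ := exists_mem_varGen_of_mem_varGen_iUnion hW hLFW
      (monotone_nat_of_le_succ fun i => (hCss i).le) hCW (hWC ▸ hBW)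
    have hWCi : W ⊆ C i := hWB ▸ (hCvar i).varGen_subset
      (Set.singleton_subset_iff.mpr ((hCvar i).varGen_eq ▸ hBi))
    exact (hCss i).not_subset ((hCW (i + 1)).trans hWCi)

/-- **Lemma (finitely generated subvarieties via ACC).** Let `V` be a locally finite
variety and `W` a subvariety of `V`. Then the following are equivalent:
1. there is no infinite strictly ascending chain `V₁ ⊂ V₂ ⊂ ⋯` of varieties
   with `W = Var(⋃ᵢ Vᵢ)`;
2. `W` is finitely generated. -/
theorem no_ascending_chain_iff_finitely_generated
    (L : FirstOrder.Language) [L.IsAlgebraic]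
    (V : Set (Alg L)) (hV : IsVariety L V) (hLF : IsLocallyFinite L V)
    (W : Set (Alg L)) (hW : IsVariety L W) (hWV : W ⊆ V) :
    (¬ ∃ C : ℕ → Set (Alg L),
        (∀ i, IsVariety L (C i)) ∧ (∀ i, C i ⊂ C (i + 1)) ∧
        W = varGen L (⋃ i, C i)) ↔
      (∃ B : Alg L, Finite B.carrier ∧ W = varGen L {B}) :=
  no_ascending_chain_iff_finitely_generated_general L V hLF W hW hWV
end

section
/- Let A be a finite nonempty set and let A^+ = ⋃_{n∈ℕ} A^n be the set of nonempty finite tuples over A, ordered by ≤_a. Then (A^+, ≤_a) is well partially ordered, and the set U(A^+, ≤_a) of upward closed subsets of A^+, ordered by inclusion, satisfies the ascending chain condition. -/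
/-- `i` is the position of the first occurrence of the letter `l.get i` in `l`. -/
def IsFirstOcc {A : Type} (l : List A) (i : Fin l.length) : Prop :=
  ∀ j : Fin l.length, j < i → l.get j ≠ l.get i

/-- `h` witnesses `a ≤ₐ b`: `h` is injective and increasing, `aᵢ = b_{h i}`,
`a` and `b` have the same set of letters, and `h` maps the first occurrence of
each letter of `a` to the first occurrence of that letter in `b`. -/
def WitnessesLeA {A : Type} (a b : List A) (h : Fin a.length → Fin b.length) : Prop :=
  StrictMono h ∧
  (∀ i : Fin a.length, a.get i = b.get (h i)) ∧
  (∀ x : A, x ∈ a ↔ x ∈ b) ∧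
  (∀ i : Fin a.length, IsFirstOcc a i → ∀ j : Fin b.length, j < h i → b.get j ≠ a.get i)

/-- The partial order `≤ₐ` on tuples over `A`. -/
def LeA {A : Type} (a b : List A) : Prop :=
  ∃ h : Fin a.length → Fin b.length, WitnessesLeA a b h

/-- `A⁺`: the set of nonempty finite tuples over `A`. -/
def TupPlus (A : Type) : Type := {l : List A // l ≠ []}

/-!
Tag every letter of a tuple with the letter set of the tuple and with whether it is a first
occurrence. A subword embedding of the tagged tuples then witnesses `≤ₐ`, so Higman's lemma over
the finite alphabet of tags makes `≤ₐ` a well-quasi-order; it is antisymmetric because every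
witness is in particular a subword embedding. A strictly ascending chain `S₀ ⊂ S₁ ⊂ ⋯` of upward
closed sets would give `xᵢ ∈ Sᵢ₊₁ \ Sᵢ` with no `xₘ ≤ xₙ` for `m < n`.
-/

theorem List.wellQuasiOrdered_sublist {α : Type*} [Finite α] :
    WellQuasiOrdered (fun l₁ l₂ : List α => l₁.Sublist l₂) := by
  have higman := (Set.partiallyWellOrderedOn_univ_iff.2
    (Finite.wellQuasiOrdered (α := α) (· = ·))).partiallyWellOrderedOn_sublistForall₂ (· = ·)
  intro f
  obtain ⟨m, n, hmn, hsub⟩ := higman (fun k => ⟨f k, fun x _ => Set.mem_univ x⟩)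
  obtain ⟨l, hl, hsub⟩ := List.sublistForall₂_iff.1 hsub
  rw [List.forall₂_eq_eq_eq] at hl
  subst hl
  exact ⟨m, n, hmn, hsub⟩

section LeA

variable {A : Type} {a b c : List A}

theorem WitnessesLeA.isFirstOcc_apply {h : Fin a.length → Fin b.length} (hw : WitnessesLeA a b h)
    {i : Fin a.length} (hi : IsFirstOcc a i) : IsFirstOcc b (h i) :=
  fun j hj heq => hw.2.2.2 i hi j hj (heq.trans (hw.2.1 i).symm)

theorem LeA.sublist (hab : LeA a b) : a.Sublist b := by
  obtain ⟨h, hmono, hget, -⟩ := hab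
  exact List.sublist_iff_exists_fin_orderEmbedding_get_eq.2 ⟨.ofStrictMono h hmono, hget⟩

theorem leA_refl (a : List A) : LeA a a :=
  ⟨id, strictMono_id, fun _ => rfl, fun _ => Iff.rfl, fun _ hi => hi⟩

theorem LeA.trans (hab : LeA a b) (hbc : LeA b c) : LeA a c := by
  obtain ⟨g, hg⟩ := hab
  obtain ⟨k, hk⟩ := hbc
  refine ⟨k ∘ g, hk.1.comp hg.1, fun i => (hg.2.1 i).trans (hk.2.1 (g i)),
    fun x => (hg.2.2.1 x).trans (hk.2.2.1 x), fun i hi j hj => ?_⟩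
  rw [hg.2.1 i]
  exact hk.2.2.2 (g i) (hg.isFirstOcc_apply hi) j hj

theorem LeA.antisymm (hab : LeA a b) (hba : LeA b a) : a = b :=
  hab.sublist.antisymm hba.sublist

def firstOccTags (a : List A) : List (Set A × A × Prop) :=
  List.ofFn fun i => ({x | x ∈ a}, a.get i, IsFirstOcc a i)

theorem length_firstOccTags (a : List A) : (firstOccTags a).length = a.length :=
  List.length_ofFn

theorem leA_of_firstOccTags_sublist (ha : a ≠ [])
    (hs : (firstOccTags a).Sublist (firstOccTags b)) : LeA a b := by
  obtain ⟨e, he⟩ := List.sublist_iff_exists_fin_orderEmbedding_get_eq.1 hs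
  let h : Fin a.length → Fin b.length := fun i =>
    Fin.cast (length_firstOccTags b) (e (Fin.cast (length_firstOccTags a).symm i))
  have htag : ∀ i, ({x | x ∈ a}, a.get i, IsFirstOcc a i) =
      ({x | x ∈ b}, b.get (h i), IsFirstOcc b (h i)) := by
    intro i
    have := he (Fin.cast (length_firstOccTags a).symm i)
    simp only [firstOccTags, List.get_ofFn] at this
    exact this
  have hget i : a.get i = b.get (h i) := congrArg (·.2.1) (htag i)
  have hfirst i : IsFirstOcc a i = IsFirstOcc b (h i) := congrArg (·.2.2) (htag i)
  have hletters : {x | x ∈ a} = {x | x ∈ b} :=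
    congrArg Prod.fst (htag ⟨0, List.length_pos_iff.2 ha⟩)
  exact ⟨h, fun _ _ hij => e.strictMono hij, hget, Set.ext_iff.1 hletters,
    fun i hi j hj heq => (hfirst i ▸ hi) j hj (heq.trans (hget i))⟩

end LeA

instance {A : Type} : PartialOrder (TupPlus A) where
  le x y := LeA x.1 y.1
  le_refl x := leA_refl x.1
  le_trans _ _ _ := LeA.trans
  le_antisymm _ _ hxy hyx := Subtype.ext (hxy.antisymm hyx)

instance {A : Type} [Finite A] : WellQuasiOrderedLE (TupPlus A) where
  wqo f := by
    obtain ⟨m, n, hmn, hs⟩ := List.wellQuasiOrdered_sublist fun k => firstOccTags (f k).1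
    exact ⟨m, n, hmn, leA_of_firstOccTags_sublist (f m).2 hs⟩

theorem WellQuasiOrderedLE.not_strictMono_of_isUpperSet {α : Type*} [LE α] [WellQuasiOrderedLE α]
    {S : ℕ → Set α} (hS : ∀ i, IsUpperSet (S i)) : ¬ StrictMono S := by
  intro hmono
  choose x hx_mem hx_not using fun i => Set.exists_of_ssubset (hmono (Nat.lt_succ_self i))
  obtain ⟨m, n, hmn, hle⟩ := wellQuasiOrdered_le x
  exact hx_not n (hS n hle (hmono.monotone hmn (hx_mem m)))

theorem tupPlus_wpo_and_acc_upward_closed_general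
    (A : Type) [Finite A] :
    ((¬ ∃ f : ℕ → TupPlus A, ∀ i, LeA (f (i + 1)).1 (f i).1 ∧ f (i + 1) ≠ f i) ∧
      ¬ ∃ f : ℕ → TupPlus A, ∀ i j, i ≠ j → ¬ LeA (f i).1 (f j).1) ∧
    ¬ ∃ S : ℕ → Set (TupPlus A),
        (∀ i, ∀ x ∈ S i, ∀ y : TupPlus A, LeA x.1 y.1 → y ∈ S i) ∧
        (∀ i, S i ⊂ S (i + 1)) := by
  refine ⟨⟨?_, ?_⟩, ?_⟩
  · rintro ⟨f, hf⟩
    obtain ⟨n, hn⟩ := WellFounded.not_rel_apply_succ (α := TupPlus A) (r := (· < ·)) f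
    exact hn (lt_of_le_of_ne (hf n).1 (hf n).2)
  · rintro ⟨f, hf⟩
    obtain ⟨m, n, hmn, hle⟩ := wellQuasiOrdered_le f
    exact hf m n hmn.ne hle
  · rintro ⟨S, hup, hS⟩
    exact WellQuasiOrderedLE.not_strictMono_of_isUpperSet
      (fun i _ _ hle hx => hup i _ hx _ hle) (strictMono_nat_of_lt_succ hS)

/-- **Proposition (well partial order on tuples).** For a finite nonempty set `A`,
the ordered set `(A⁺, ≤ₐ)` is well partially ordered (it has no infinite strictly
descending chains and no infinite antichains), and the set of upward closed subsets
of `A⁺`, ordered by inclusion, satisfies the ascending chain condition. -/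
theorem tupPlus_wpo_and_acc_upward_closed
    (A : Type) [Finite A] [Nonempty A] :
    ((¬ ∃ f : ℕ → TupPlus A, ∀ i, LeA (f (i + 1)).1 (f i).1 ∧ f (i + 1) ≠ f i) ∧
      ¬ ∃ f : ℕ → TupPlus A, ∀ i j, i ≠ j → ¬ LeA (f i).1 (f j).1) ∧
    ¬ ∃ S : ℕ → Set (TupPlus A),
        (∀ i, ∀ x ∈ S i, ∀ y : TupPlus A, LeA x.1 y.1 → y ∈ S i) ∧
        (∀ i, S i ⊂ S (i + 1)) :=
  tupPlus_wpo_and_acc_upward_closed_general A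
end

section
/- Let t ∈ ℕ, A = {1,2,…,t}, a ∈ A^m, b ∈ A^n, and let h : {1,…,m} → {1,…,n} be a function witnessing a ≤_a b. Define T_{a,b} : {1,…,n} → {1,…,m} by T_{a,b}(j) = h^{-1}(j) if j ∈ ran(h), and otherwise T_{a,b}(j) = min{ i : a_i = b_j }. Let c ∈ A^m with c <_lex a (in the lexicographic order on A^m induced by the natural order on A). Then (1) the tuple (a_{T_{a,b}(j)})_{j=1}^n equals b, and (2) the tuple (c_{T_{a,b}(j)})_{j=1}^n is strictly lexicographically smaller than b. -/
/-
The map `T` is a left inverse of `h` which never moves an index to the right of `h`: a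
position `j` outside the range of `h` is sent to the first occurrence `T j` of the letter `b j`
in `a`, and since `h` sends first occurrences to first occurrences, `h (T j) < j`. Hence `T`
maps every position before `h i` to a position before `i`. If `c` and `a` first differ at `i`,
then `c ∘ T` agrees with `a ∘ T = b` before `h i` and is smaller at `h i`.
-/

/-- The strict lexicographic order on tuples `Fin m → Fin t`
(for `A = {1, …, t}` with its natural order). -/
def LtLex {m t : ℕ} (c a : Fin m → Fin t) : Prop :=
  ∃ i : Fin m, (∀ j : Fin m, j < i → c j = a j) ∧ c i < a i

/-- `h` witnesses `a ≤ₐ b` for tuples `a ∈ Aᵐ`, `b ∈ Aⁿ` over `A = {1, …, t}`: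
`h` is injective and increasing, `aᵢ = b_{h i}`, `a` and `b` have the same set of
letters, and `h` maps the first occurrence of each letter of `a` to the first
occurrence of that letter in `b`. -/
def WitnessesF {t m n : ℕ} (a : Fin m → Fin t) (b : Fin n → Fin t)
    (h : Fin m → Fin n) : Prop :=
  StrictMono h ∧
  (∀ i : Fin m, a i = b (h i)) ∧
  Set.range a = Set.range b ∧
  (∀ i : Fin m, (∀ i' : Fin m, i' < i → a i' ≠ a i) →
    ∀ j : Fin n, j < h i → b j ≠ a i)

theorem LtLex.comp_of_leftInverse {t m n : ℕ} {c a : Fin m → Fin t} {b : Fin n → Fin t}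
    {h : Fin m → Fin n} {T : Fin n → Fin m} (hc : LtLex c a) (hb : ∀ j, a (T j) = b j)
    (hT : ∀ i, T (h i) = i) (hlt : ∀ i j, j < h i → T j < i) :
    LtLex (fun j => c (T j)) b := by
  obtain ⟨i, heq, hlti⟩ := hc
  refine ⟨h i, fun j hj => ?_, ?_⟩
  · show c (T j) = b j
    rw [heq (T j) (hlt i j hj), hb j]
  · show c (T (h i)) < b (h i)
    rw [← hb (h i), hT i]
    exact hlti

section Witness

variable {t m n : ℕ} {a : Fin m → Fin t} {b : Fin n → Fin t} {h : Fin m → Fin n}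
  {T : Fin n → Fin m}

theorem apply_leftInverse_eq_of_witness (hab : ∀ i, a i = b (h i)) (hT₁ : ∀ i, T (h i) = i)
    (hT₂ : ∀ j, j ∉ Set.range h → a (T j) = b j) (j : Fin n) : a (T j) = b j := by
  by_cases hj : j ∈ Set.range h
  · obtain ⟨i, rfl⟩ := hj
    rw [hT₁, hab]
  · exact hT₂ j hj

theorem map_leftInverse_le_of_witness
    (hfo : ∀ i, (∀ i' < i, a i' ≠ a i) → ∀ j < h i, b j ≠ a i) (hT₁ : ∀ i, T (h i) = i)
    (hT₂ : ∀ j, j ∉ Set.range h → a (T j) = b j ∧ ∀ i < T j, a i ≠ b j) (j : Fin n) :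
    h (T j) ≤ j := by
  by_cases hj : j ∈ Set.range h
  · obtain ⟨i, rfl⟩ := hj
    rw [hT₁]
  · obtain ⟨heq, hfirst⟩ := hT₂ j hj
    refine le_of_not_gt fun hlt => hfo (T j) (fun i' hi' => ?_) j hlt heq.symm
    rw [heq]
    exact hfirst i' hi'

theorem leftInverse_lt_of_lt_of_witness (hw : WitnessesF a b h) (hT₁ : ∀ i, T (h i) = i)
    (hT₂ : ∀ j, j ∉ Set.range h → a (T j) = b j ∧ ∀ i < T j, a i ≠ b j) {i : Fin m} {j : Fin n}
    (hj : j < h i) : T j < i :=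
  hw.1.lt_iff_lt.mp ((map_leftInverse_le_of_witness hw.2.2.2 hT₁ hT₂ j).trans_lt hj)

end Witness

/-- **Lemma (substitution along a witness preserves lexicographic order).**
Let `a ∈ Aᵐ`, `b ∈ Aⁿ` over `A = {1, …, t}`, let `h` witness `a ≤ₐ b`, and let
`T = T_{a,b} : {1,…,n} → {1,…,m}` be defined by `T j = h⁻¹ j` for `j` in the range
of `h` and `T j = min { i : aᵢ = bⱼ }` otherwise. If `c ∈ Aᵐ` with `c <ₗₑₓ a`, then
(1) `(a_{T j})ⱼ = b`, and (2) `(c_{T j})ⱼ <ₗₑₓ b`. -/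
theorem witness_transfer_lex
    (t m n : ℕ) (a : Fin m → Fin t) (b : Fin n → Fin t)
    (h : Fin m → Fin n) (hw : WitnessesF a b h)
    (T : Fin n → Fin m)
    (hT₁ : ∀ i : Fin m, T (h i) = i)
    (hT₂ : ∀ j : Fin n, j ∉ Set.range h →
      a (T j) = b j ∧ ∀ i : Fin m, i < T j → a i ≠ b j)
    (c : Fin m → Fin t) (hc : LtLex c a) :
    (∀ j : Fin n, a (T j) = b j) ∧ LtLex (fun j => c (T j)) b := by
  have hb : ∀ j, a (T j) = b j :=
    apply_leftInverse_eq_of_witness hw.2.1 hT₁ fun j hj => (hT₂ j hj).1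
  exact ⟨hb, hc.comp_of_leftInverse hb hT₁
    fun _ _ hj => leftInverse_lt_of_lt_of_witness hw hT₁ hT₂ hj⟩
end

section
/- Let k, m ∈ ℕ with k ≥ 2, and let A be an algebra with a k-edge term. Let F and G be subuniverses of A^m with F ⊆ G. Assume that φ_i(G) = φ_i(F) for all i ∈ {1,…,m}, and that π_T(F) = π_T(G) for all T ⊆ {1,…,m} with |T| < k. Then F = G. -/
/-!
Go through the coordinates in order. If `x ∈ F` agrees with `g ∈ G` below `n`, the fork
condition at `n` yields `p, q ∈ F` that agree below `n` with `(p n, q n) = (x n, g n)`.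
By induction on `|C|`, every `C` below `n` then has an element of `F` agreeing with `g`
on `C ∪ {n}`: small `C` are handled by the projection condition; otherwise pick distinct
`θ₁, …, θ_{k-2} ∈ C`, an element `z` agreeing with `g` on `{θ₁, …, θ_{k-2}, n}` and
elements `e_l` agreeing with `g` on `(C ∖ {θ_l}) ∪ {n}`. The edge identities show that
`t(t(p,x,p,z,…,z), t(x,x,x,e₁,…), t(p,x,q,z,…,z), e₁, …)` agrees with `g` on `C ∪ {n}`.
-/

open FirstOrder FirstOrder.Language

/-- `F ⊆ Aᵐ` is a subuniverse of the power algebra `Aᵐ`: it is closed under all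
operations of `A`, applied componentwise. -/
def IsSubuniverse (L : FirstOrder.Language) {A : Type} [L.Structure A] {m : ℕ}
    (F : Set (Fin m → A)) : Prop :=
  ∀ (l : ℕ) (f : L.Functions l) (v : Fin l → (Fin m → A)),
    (∀ i, v i ∈ F) → (fun p => Structure.funMap f (fun i => v i p)) ∈ F

/-- The fork relation `φᵢ(F)` of `F ⊆ Aᵐ` at place `i`: all pairs `(xᵢ, yᵢ)` with
`x, y ∈ F` agreeing at all places before `i`. -/
def fork {A : Type} {m : ℕ} (F : Set (Fin m → A)) (i : Fin m) : Set (A × A) :=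
  {p | ∃ x ∈ F, ∃ y ∈ F, (∀ j : Fin m, j < i → x j = y j) ∧ p = (x i, y i)}

/-- The projection `π_T(F)` of `F ⊆ Aᵐ` onto the coordinates in `T`. -/
def projT {A : Type} {m : ℕ} (F : Set (Fin m → A)) (T : Finset (Fin m)) :
    Set ((j : T) → A) :=
  {g | ∃ x ∈ F, ∀ j : T, g j = x (j : Fin m)}

theorem Fin.cons_const_self {α : Type*} {n : ℕ} (x : α) :
    (Fin.cons x fun _ => x : Fin (n + 1) → α) = fun _ => x :=
  Fin.cons_self_tail (fun _ : Fin (n + 1) => x)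

def IsClosedUnder {A : Type} {m l : ℕ} (f : (Fin l → A) → A) (F : Set (Fin m → A)) : Prop :=
  ∀ v : Fin l → Fin m → A, (∀ i, v i ∈ F) → (fun j => f fun i => v i j) ∈ F

theorem IsSubuniverse.isClosedUnder_realize {L : FirstOrder.Language} {A : Type}
    [L.Structure A] {m l : ℕ} {F : Set (Fin m → A)} (hF : IsSubuniverse L F)
    (t : L.Term (Fin l)) : IsClosedUnder (fun v => t.realize v) F := by
  induction t with
  | var i => exact fun v hv => hv i
  | func φ ts ih => exact fun v hv => hF _ φ _ fun i => ih i v hv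

theorem exists_eqOn_of_projT_subset {A : Type} {m : ℕ} {F G : Set (Fin m → A)}
    {T : Finset (Fin m)} (h : projT G T ⊆ projT F T) {g : Fin m → A} (hg : g ∈ G) :
    ∃ z ∈ F, Set.EqOn z g T := by
  obtain ⟨z, hz, hzg⟩ := h ⟨g, hg, fun _ => rfl⟩
  exact ⟨z, hz, fun j hj => (hzg ⟨j, hj⟩).symm⟩

section EdgeOp

-- `k + 2` plays the role of the paper's `k`: `f` takes three leading arguments and `k` more.
variable {A : Type} {m k : ℕ} {f : (Fin (k + 2 + 1) → A) → A} {F G : Set (Fin m → A)}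

theorem IsEdgeOp.apply_yyx (hf : IsEdgeOp (k + 2) f) (x y : A) :
    f (Fin.cons y (Fin.cons y (Fin.cons x fun _ => x))) = x := by
  convert hf.1 x y using 2
  funext i
  match i with
  | ⟨0, _⟩ | ⟨1, _⟩ | ⟨2, _⟩ => rfl
  | ⟨j + 3, _⟩ => simp [Fin.cons]

theorem IsEdgeOp.apply_yxy (hf : IsEdgeOp (k + 2) f) (x y : A) :
    f (Fin.cons y (Fin.cons x (Fin.cons y fun _ => x))) = x := by
  convert hf.2.1 x y using 2
  funext i
  match i with
  | ⟨0, _⟩ | ⟨1, _⟩ | ⟨2, _⟩ => rfl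
  | ⟨j + 3, _⟩ => simp [Fin.cons]

theorem IsEdgeOp.apply_xxx_of_subsingleton (hf : IsEdgeOp (k + 2) f) {x : A} {e : Fin k → A}
    (he : {l | e l ≠ x}.Subsingleton) : f (Fin.cons x (Fin.cons x (Fin.cons x e))) = x := by
  by_cases hex : ∃ l, e l ≠ x
  · obtain ⟨l, hl⟩ := hex
    have hupd : e = Function.update (fun _ => x) l (e l) :=
      Function.eq_update_iff.2 ⟨rfl, fun l' hl' => by_contra fun h => hl' (he h hl)⟩
    rw [hupd, Fin.cons_update, Fin.cons_update, Fin.cons_update]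
    simp only [Fin.cons_const_self]
    exact hf.2.2 _ (by simp) x _
  · push Not at hex
    rw [show e = fun _ => x from funext hex]
    exact hf.apply_yyx x x

theorem IsClosedUnder.cons_mem (hF : IsClosedUnder f F) {a b c : Fin m → A}
    {e : Fin k → Fin m → A} (ha : a ∈ F) (hb : b ∈ F) (hc : c ∈ F) (he : ∀ l, e l ∈ F) :
    (fun j => f (Fin.cons (a j) (Fin.cons (b j) (Fin.cons (c j) fun l => e l j)))) ∈ F := by
  convert hF (Fin.cons a (Fin.cons b (Fin.cons c e))) (Fin.forall_fin_succ.2 ⟨ha,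
    Fin.forall_fin_succ.2 ⟨hb, Fin.forall_fin_succ.2 ⟨hc, he⟩⟩⟩) using 1
  funext j
  congr 1
  funext i
  match i with
  | ⟨0, _⟩ | ⟨1, _⟩ | ⟨2, _⟩ | ⟨_ + 3, _⟩ => rfl

theorem exists_eqOn_insert_of_isEdgeOp (hf : IsEdgeOp (k + 2) f) (hF : IsClosedUnder f F)
    {C : Set (Fin m)} {n : Fin m} {g x p q z : Fin m → A} {e : Fin k → Fin m → A}
    {θ : Fin k → Fin m} (hx : x ∈ F) (hp : p ∈ F) (hq : q ∈ F) (hz : z ∈ F)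
    (he : ∀ l, e l ∈ F) (hxg : Set.EqOn x g C) (hpq : Set.EqOn p q C) (hpn : p n = x n)
    (hqn : q n = g n) (hθ : Function.Injective θ)
    (hzg : Set.EqOn z g (insert n (Set.range θ)))
    (heg : ∀ l, Set.EqOn (e l) g (insert n (C \ {θ l}))) :
    ∃ w ∈ F, Set.EqOn w g (insert n C) := by
  have hen : ∀ l, e l n = g n := fun l => heg l (Set.mem_insert _ _)
  have heC : ∀ j ∈ C, {l | e l j ≠ g j}.Subsingleton := by
    have hθe : ∀ j ∈ C, ∀ l, e l j ≠ g j → j = θ l := fun j hj l hl =>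
      by_contra fun hne => hl (heg l (Or.inr ⟨hj, hne⟩))
    exact fun j hj l₁ hl₁ l₂ hl₂ => hθ ((hθe j hj l₁ hl₁).symm.trans (hθe j hj l₂ hl₂))
  obtain ⟨S₁, hS₁, hS₁j⟩ : ∃ S ∈ F, ∀ j,
      S j = f (Fin.cons (p j) (Fin.cons (x j) (Fin.cons (p j) fun _ => z j))) :=
    ⟨_, hF.cons_mem hp hx hp fun _ => hz, fun _ => rfl⟩
  obtain ⟨S₂, hS₂, hS₂j⟩ : ∃ S ∈ F, ∀ j,
      S j = f (Fin.cons (x j) (Fin.cons (x j) (Fin.cons (x j) fun l => e l j))) :=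
    ⟨_, hF.cons_mem hx hx hx he, fun _ => rfl⟩
  obtain ⟨S₃, hS₃, hS₃j⟩ : ∃ S ∈ F, ∀ j,
      S j = f (Fin.cons (p j) (Fin.cons (x j) (Fin.cons (q j) fun _ => z j))) :=
    ⟨_, hF.cons_mem hp hx hq fun _ => hz, fun _ => rfl⟩
  have hS₃_eq_S₁ : ∀ j ∈ C, S₃ j = S₁ j := fun j hj => by rw [hS₁j, hS₃j, hpq hj]
  have hS₁θ : ∀ l, θ l ∈ C → S₁ (θ l) = g (θ l) := fun l hl => by
    rw [hS₁j, hxg hl, hzg (Or.inr ⟨l, rfl⟩)]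
    exact hf.apply_yxy _ _
  have hS₂C : ∀ j ∈ C, S₂ j = g j := fun j hj => by
    rw [hS₂j, hxg hj]
    exact hf.apply_xxx_of_subsingleton (heC j hj)
  have hS₂n : S₂ n = S₁ n := by
    rw [hS₁j, hS₂j, hpn, hzg (Set.mem_insert _ _)]
    simp only [hen]
  have hS₃n : S₃ n = g n := by
    rw [hS₃j, hpn, hqn, hzg (Set.mem_insert _ _)]
    exact hf.apply_yyx _ _
  refine ⟨_, hF.cons_mem hS₁ hS₂ hS₃ he, ?_⟩
  rintro j (rfl | hj)
  · simp only [hS₂n, hS₃n, hen]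
    exact hf.apply_yyx _ _
  by_cases hjθ : j ∈ Set.range θ
  · obtain ⟨l, rfl⟩ := hjθ
    simp only [hS₃_eq_S₁ _ hj, hS₁θ l hj, hS₂C _ hj]
    exact hf.apply_xxx_of_subsingleton (heC _ hj)
  · have hej : ∀ l, e l j = g j := fun l => heg l (Or.inr ⟨hj, fun h => hjθ ⟨l, h.symm⟩⟩)
    simp only [hS₃_eq_S₁ j hj, hS₂C j hj, hej]
    exact hf.apply_yxy _ _

theorem exists_eqOn_insert_of_card_le (hf : IsEdgeOp (k + 2) f) (hF : IsClosedUnder f F)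
    {D : Finset (Fin m)} {n : Fin m} {g x p q : Fin m → A} (hx : x ∈ F) (hp : p ∈ F)
    (hq : q ∈ F) (hxg : Set.EqOn x g D) (hpq : Set.EqOn p q D) (hpn : p n = x n)
    (hqn : q n = g n)
    (hsmall : ∀ C ⊆ D, C.card ≤ k → ∃ z ∈ F, Set.EqOn z g (insert n ↑C)) :
    ∀ C ⊆ D, ∃ z ∈ F, Set.EqOn z g (insert n ↑C) := by
  intro C
  induction C using Finset.strongInduction with
  | H C ih =>
  intro hCD
  rcases le_or_gt C.card k with hC | hC
  · exact hsmall C hCD hC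
  obtain ⟨Θ, hΘC, hΘ⟩ := Finset.exists_subset_card_eq hC.le
  set θ := Θ.orderEmbOfFin hΘ
  have hθC : ∀ l, θ l ∈ C := fun l => hΘC (Θ.orderEmbOfFin_mem hΘ l)
  obtain ⟨z, hz, hzg⟩ :=
    ih Θ (Finset.ssubset_iff_subset_ne.2 ⟨hΘC, by rintro rfl; omega⟩) (hΘC.trans hCD)
  choose e he heg using fun l =>
    ih _ (Finset.erase_ssubset (hθC l)) ((C.erase_subset _).trans hCD)
  refine exists_eqOn_insert_of_isEdgeOp hf hF hx hp hq hz he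
    (hxg.mono (Finset.coe_subset.2 hCD)) (hpq.mono (Finset.coe_subset.2 hCD)) hpn hqn
    θ.injective ?_ ?_
  · rwa [Finset.range_orderEmbOfFin]
  · simpa only [Finset.coe_erase] using heg

theorem exists_eqOn_Iic_of_eqOn_Iio (hf : IsEdgeOp (k + 2) f) (hF : IsClosedUnder f F)
    (hFG : F ⊆ G) (hfork : ∀ i, fork G i ⊆ fork F i)
    (hproj : ∀ T : Finset (Fin m), T.card ≤ k + 1 → projT G T ⊆ projT F T)
    {g : Fin m → A} (hg : g ∈ G) {n : Fin m} {x : Fin m → A} (hx : x ∈ F)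
    (hxg : Set.EqOn x g (Set.Iio n)) : ∃ z ∈ F, Set.EqOn z g (Set.Iic n) := by
  obtain ⟨p, hp, q, hq, hpq, hpqn⟩ := hfork n ⟨x, hFG hx, g, hg, fun j hj => hxg hj, rfl⟩
  obtain ⟨hpn, hqn⟩ := Prod.ext_iff.1 hpqn
  rw [← Set.Iio_insert, ← Finset.coe_Iio]
  refine exists_eqOn_insert_of_card_le hf hF hx hp hq (by rwa [Finset.coe_Iio])
    (fun j hj => hpq j (Finset.mem_Iio.1 hj)) hpn.symm hqn.symm ?_ _ subset_rfl
  intro C _ hC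
  rw [← Finset.coe_insert]
  exact exists_eqOn_of_projT_subset
    (hproj _ ((Finset.card_insert_le _ _).trans (by omega))) hg

theorem subset_of_fork_subset_of_projT_subset (hf : IsEdgeOp (k + 2) f)
    (hF : IsClosedUnder f F) (hFG : F ⊆ G) (hfork : ∀ i, fork G i ⊆ fork F i)
    (hproj : ∀ T : Finset (Fin m), T.card ≤ k + 1 → projT G T ⊆ projT F T) : G ⊆ F := by
  intro g hg
  have hprefix : ∀ n : ℕ, ∃ x ∈ F, Set.EqOn x g {j | (j : ℕ) < n} := by
    intro n
    induction n with
    | zero =>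
      obtain ⟨x, hx, -⟩ := exists_eqOn_of_projT_subset (hproj ∅ (Nat.zero_le _)) hg
      exact ⟨x, hx, fun j hj => absurd hj (Nat.not_lt_zero _)⟩
    | succ n ih =>
      obtain ⟨x, hx, hxg⟩ := ih
      by_cases hn : n < m
      · obtain ⟨z, hz, hzg⟩ := exists_eqOn_Iic_of_eqOn_Iio hf hF hFG hfork hproj hg
          (n := ⟨n, hn⟩) hx fun j hj => hxg hj
        exact ⟨z, hz, fun j hj => hzg (Nat.lt_succ_iff.1 hj)⟩
      · exact ⟨x, hx, fun j _ => hxg (lt_of_lt_of_le j.2 (not_lt.1 hn))⟩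
  obtain ⟨x, hx, hxg⟩ := hprefix m
  rwa [← (funext fun j => hxg j.2 : x = g)]

end EdgeOp

theorem subuniverse_eq_of_forks_and_small_projections_general
    (L : FirstOrder.Language) (k m : ℕ) (hk : 2 ≤ k)
    (A : Type) [L.Structure A]
    (hET : ∃ t : L.Term (Fin (k + 1)),
      IsEdgeOp k (fun v : Fin (k + 1) → A => t.realize v))
    (F G : Set (Fin m → A))
    (hF : IsSubuniverse L F) (hFG : F ⊆ G)
    (hfork : ∀ i : Fin m, fork G i = fork F i)
    (hproj : ∀ T : Finset (Fin m), T.card < k → projT F T = projT G T) :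
    F = G := by
  obtain ⟨k, rfl⟩ := Nat.exists_eq_add_of_le' hk
  obtain ⟨t, ht⟩ := hET
  refine hFG.antisymm (subset_of_fork_subset_of_projT_subset ht (hF.isClosedUnder_realize t)
    hFG (fun i => (hfork i).le) fun T hT => (hproj T ?_).ge)
  omega

/-- **Lemma (forks determine subpowers in the presence of an edge term).**
Let `A` be an algebra with a `k`-edge term (`k ≥ 2`), and let `F ⊆ G` be
subuniverses of `Aᵐ` such that `φᵢ(G) = φᵢ(F)` for all `i` and
`π_T(F) = π_T(G)` for all `T ⊆ {1, …, m}` with `|T| < k`. Then `F = G`. -/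
theorem subuniverse_eq_of_forks_and_small_projections
    (L : FirstOrder.Language) (k m : ℕ) (hk : 2 ≤ k)
    (A : Type) [L.Structure A]
    (hET : ∃ t : L.Term (Fin (k + 1)),
      IsEdgeOp k (fun v : Fin (k + 1) → A => t.realize v))
    (F G : Set (Fin m → A))
    (hF : IsSubuniverse L F) (hG : IsSubuniverse L G) (hFG : F ⊆ G)
    (hfork : ∀ i : Fin m, fork G i = fork F i)
    (hproj : ∀ T : Finset (Fin m), T.card < k → projT F T = projT G T) :
    F = G :=
  subuniverse_eq_of_forks_and_small_projections_general L k m hk A hET F G hF hFG hfork hproj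
end

section
/- Let A be an algebra and let W_1, W_2 be subvarieties of Var(A). Then W_1 ⊆ W_2 if and only if Th_A(W_2) ⊆ Th_A(W_1), where Th_A(W) := { (a_1,…,a_k) ↦ (s^A(a), t^A(a)) : k ∈ ℕ, s, t are k-variable terms in the language of A with W ⊨ s ≈ t } is the clonoid with source set A and target algebra A × A associated to W. -/
open FirstOrder FirstOrder.Language

universe u v

/-- The clonoid `Th_A(W)` associated with a subvariety `W` of `Var(A)`: for each
arity `k`, the set of functions `Aᵏ → A × A` of the form `a ↦ (sᴬ(a), tᴬ(a))`
where `s, t` are `k`-variable terms with `W ⊨ s ≈ t`. -/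
def ThA {L : FirstOrder.Language} (A : Alg L) (W : Set (Alg L)) (k : ℕ) :
    Set ((Fin k → A.carrier) → A.carrier × A.carrier) :=
  {F | ∃ s t : L.Term (Fin k),
        (∀ B ∈ W, B.Sat ⟨k, (s, t)⟩) ∧
        F = fun v => (s.realize v, t.realize v)}

section GaloisCorrespondence

variable {L : FirstOrder.Language} {A B : Alg L}

theorem thA_antitone {W₁ W₂ : Set (Alg L)} (hW : W₁ ⊆ W₂) (k : ℕ) :
    ThA A W₂ k ⊆ ThA A W₁ k := by
  rintro F ⟨s, t, hst, rfl⟩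
  exact ⟨s, t, fun C hC => hst C (hW hC), rfl⟩

theorem realize_pair_mem_thA_modClass {E : Set (Identity L)} {n : ℕ}
    {s t : L.Term (Fin n)} (he : ⟨n, (s, t)⟩ ∈ E) :
    (fun v : Fin n → A.carrier => (s.realize v, t.realize v)) ∈ ThA A (ModClass L E) n :=
  ⟨s, t, fun _ hM => hM _ he, rfl⟩

theorem Alg.sat_of_mem_varGen_singleton (hB : B ∈ varGen L {A}) {e : Identity L}
    (hA : A.Sat e) : B.Sat e :=
  hB e fun _ hC => (Set.mem_singleton_iff.mp hC) ▸ hA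

/-- Since `B ∈ Var(A)` satisfies every identity of `A`, whether `B ⊨ s ≈ t` depends only on
the term functions `sᴬ, tᴬ`. -/
theorem Alg.sat_of_realize_pair_mem_thA {W : Set (Alg L)} (hBW : B ∈ W)
    (hBA : B ∈ varGen L {A}) {n : ℕ} {s t : L.Term (Fin n)}
    (hst : (fun v : Fin n → A.carrier => (s.realize v, t.realize v)) ∈ ThA A W n) :
    B.Sat ⟨n, (s, t)⟩ := by
  obtain ⟨s', t', hW, hEq⟩ := hst
  have hs : B.Sat ⟨n, (s, s')⟩ :=
    Alg.sat_of_mem_varGen_singleton hBA fun v => (Prod.ext_iff.mp (congrFun hEq v)).1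
  have ht : B.Sat ⟨n, (t, t')⟩ :=
    Alg.sat_of_mem_varGen_singleton hBA fun v => (Prod.ext_iff.mp (congrFun hEq v)).2
  intro v
  calc s.realize v = s'.realize v := hs v
    _ = t'.realize v := hW B hBW v
    _ = t.realize v := (ht v).symm

end GaloisCorrespondence

theorem subvariety_subset_iff_thA_superset_general
    (L : FirstOrder.Language) (A : Alg L)
    (W₁ W₂ : Set (Alg L)) (h₂ : IsVariety L W₂)
    (hs₁ : W₁ ⊆ varGen L {A}) :
    W₁ ⊆ W₂ ↔ ∀ k : ℕ, ThA A W₂ k ⊆ ThA A W₁ k := by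
  refine ⟨thA_antitone, fun hTh B hB => ?_⟩
  obtain ⟨E₂, rfl⟩ := h₂
  rintro ⟨n, s, t⟩ he
  exact Alg.sat_of_realize_pair_mem_thA hB (hs₁ hB) (hTh n (realize_pair_mem_thA_modClass he))

/-- **Lemma (Galois correspondence between subvarieties and clonoids).**
For subvarieties `W₁, W₂` of `Var(A)` we have
`W₁ ⊆ W₂` if and only if `Th_A(W₂) ⊆ Th_A(W₁)`. -/
theorem subvariety_subset_iff_thA_superset
    (L : FirstOrder.Language) [L.IsAlgebraic] (A : Alg L)
    (W₁ W₂ : Set (Alg L)) (h₁ : IsVariety L W₁) (h₂ : IsVariety L W₂)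
    (hs₁ : W₁ ⊆ varGen L {A}) (hs₂ : W₂ ⊆ varGen L {A}) :
    W₁ ⊆ W₂ ↔ ∀ k : ℕ, ThA A W₂ k ⊆ ThA A W₁ k :=
  subvariety_subset_iff_thA_superset_general L A W₁ W₂ h₂ hs₁
end
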